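/- arXiv:1804.04743 — 4 statements merged into one kernel-verified Lean document; each statement's English description precedes it below -/
import Mathlib

section
/- Let (e₀, e₁, …, e_n) be an E-chain in a semigroup S and let h be an idempotent with h·e₀ = e₀·h = h. Define h₀ = h and h_i = e_i·h_{i-1}·e_i for 1 ≤ i ≤ n. Then h₀·h₁·h₂⋯h_n = h·e₀·e₁⋯e_n and h_n·h_{n-1}⋯h₁·h₀ = e_n·e_{n-1}⋯e₁·e₀·h. (Evaluation of E-chains is compatible with restriction: ε_Γ(h↓c) = h↓ε_Γ(c).) -/
/-- `fwdProd e n = e 0 * e 1 * ⋯ * e n`. -/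
def fwdProd {S : Type*} [Semigroup S] (e : ℕ → S) : ℕ → S
  | 0 => e 0
  | n + 1 => fwdProd e n * e (n + 1)

/-- `bwdProd e n = e n * e (n-1) * ⋯ * e 0`. -/
def bwdProd {S : Type*} [Semigroup S] (e : ℕ → S) : ℕ → S
  | 0 => e 0
  | n + 1 => e (n + 1) * bwdProd e n

/-- The restricted sequence: `h₀ = h` and `hᵢ = eᵢ·h_{i-1}·eᵢ` for `i ≥ 1`. -/
def hSeq {S : Type*} [Semigroup S] (e : ℕ → S) (h : S) : ℕ → S
  | 0 => h
  | i + 1 => e (i + 1) * hSeq e h i * e (i + 1)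

/-!
Write `x ≤ e` for `x * x = x`, `e * x = x`, `x * e = x`. If `hᵢ ≤ eᵢ` and `eᵢ R eᵢ₊₁`, then
`eᵢ₊₁ hᵢ = eᵢ₊₁ eᵢ hᵢ = eᵢ hᵢ = hᵢ`, so `hᵢ₊₁ = hᵢ eᵢ₊₁`; dually `hᵢ₊₁ = eᵢ₊₁ hᵢ` when
`eᵢ L eᵢ₊₁`. In both cases `hᵢ₊₁ ≤ eᵢ₊₁`, and any `a` with `a hᵢ = a` satisfies
`a hᵢ₊₁ = a eᵢ₊₁`. Applied to `a = h₀ ⋯ hᵢ` this gives `h₀ ⋯ hᵢ₊₁ = h₀ ⋯ hᵢ · eᵢ₊₁`, whence the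
forward identity by induction. The backward identity is the forward one in `Sᵐᵒᵖ`, where the
relations `R` and `L` trade places.
-/

open MulOpposite

section EChain

variable {S : Type*} [Semigroup S]

/-- `e R f` or `e L f`. -/
def EChainStep (e f : S) : Prop :=
  (e * f = f ∧ f * e = e) ∨ (e * f = e ∧ f * e = f)

def IsEChain (e : ℕ → S) (n : ℕ) : Prop :=
  (∀ i ≤ n, IsIdempotentElem (e i)) ∧ ∀ i < n, EChainStep (e i) (e (i + 1))

theorem EChainStep.op {e f : S} (hef : EChainStep e f) : EChainStep (op e) (op f) := by
  simp only [EChainStep, ← op_mul, op_inj] at hef ⊢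
  tauto

theorem IsEChain.op {e : ℕ → S} {n : ℕ} (he : IsEChain e n) :
    IsEChain (fun i => op (e i)) n :=
  ⟨fun i hi => congrArg MulOpposite.op (he.1 i hi), fun i hi => (he.2 i hi).op⟩

theorem sandwich_eq_mul_right {e f x : S} (hfe : f * e = e) (hex : e * x = x) :
    f * x * f = x * f := by
  rw [← hex, ← mul_assoc, hfe]

theorem sandwich_eq_mul_left {e f x : S} (hef : e * f = e) (hxe : x * e = x) :
    f * x * f = f * x := by
  rw [← hxe, mul_assoc, mul_assoc, hef]

namespace EChainStep

variable {e f x : S}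

theorem isIdempotentElem_sandwich (hef : EChainStep e f) (hx : IsIdempotentElem x)
    (hex : e * x = x) (hxe : x * e = x) : IsIdempotentElem (f * x * f) := by
  rcases hef with ⟨-, hfe⟩ | ⟨hef, -⟩
  · have hfx : f * x = x := by rw [← hex, ← mul_assoc, hfe]
    rw [IsIdempotentElem, sandwich_eq_mul_right hfe hex, mul_assoc, ← mul_assoc f, hfx,
      ← mul_assoc, hx.eq]
  · have hxf : x * f = x := by rw [← hxe, mul_assoc, hef]
    rw [IsIdempotentElem, sandwich_eq_mul_left hef hxe, mul_assoc, ← mul_assoc x, hxf,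
      hx.eq]

theorem mul_sandwich {a : S} (hef : EChainStep e f) (hax : a * x = a) (hex : e * x = x)
    (hxe : x * e = x) : a * (f * x * f) = a * f := by
  rcases hef with ⟨-, hfe⟩ | ⟨hef, -⟩
  · rw [sandwich_eq_mul_right hfe hex, ← mul_assoc, hax]
  · have haf : a * f = a := by rw [← hax, mul_assoc, ← hxe, mul_assoc x, hef]
    rw [sandwich_eq_mul_left hef hxe, ← mul_assoc, haf, hax]

end EChainStep

theorem fwdProd_mul_self {x : ℕ → S} (n : ℕ) (hx : IsIdempotentElem (x n)) :
    fwdProd x n * x n = fwdProd x n := by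
  cases n with
  | zero => exact hx
  | succ n => rw [fwdProd, mul_assoc, hx.eq]

theorem fwdProd_op (e : ℕ → S) (n : ℕ) :
    fwdProd (fun i => op (e i)) n = op (bwdProd e n) := by
  induction n with
  | zero => rfl
  | succ n ih => rw [fwdProd, ih, bwdProd, op_mul]

theorem hSeq_op (e : ℕ → S) (h : S) (i : ℕ) :
    hSeq (fun i => op (e i)) (op h) i = op (hSeq e h i) := by
  induction i with
  | zero => rfl
  | succ i ih => rw [hSeq, ih, hSeq, op_mul, op_mul, mul_assoc]

variable {e : ℕ → S} {n : ℕ} {h : S}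

theorem IsEChain.hSeq_le (he : IsEChain e n) (hh : IsIdempotentElem h) (hhe : h * e 0 = h)
    (heh : e 0 * h = h) (i : ℕ) (hi : i ≤ n) :
    IsIdempotentElem (hSeq e h i) ∧ e i * hSeq e h i = hSeq e h i ∧
      hSeq e h i * e i = hSeq e h i := by
  induction i with
  | zero => exact ⟨hh, heh, hhe⟩
  | succ i ih =>
    obtain ⟨hx, hex, hxe⟩ := ih (by omega)
    have hf : IsIdempotentElem (e (i + 1)) := he.1 (i + 1) hi
    refine ⟨(he.2 i hi).isIdempotentElem_sandwich hx hex hxe, ?_, ?_⟩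
    · rw [hSeq, ← mul_assoc, ← mul_assoc, hf.eq]
    · rw [hSeq, mul_assoc, hf.eq]

theorem IsEChain.fwdProd_hSeq (he : IsEChain e n) (hh : IsIdempotentElem h)
    (hhe : h * e 0 = h) (heh : e 0 * h = h) : fwdProd (hSeq e h) n = h * fwdProd e n := by
  suffices ∀ i ≤ n, fwdProd (hSeq e h) i = h * fwdProd e i from this n le_rfl
  intro i hi
  induction i with
  | zero => exact hhe.symm
  | succ i ih =>
    obtain ⟨hx, hex, hxe⟩ := he.hSeq_le hh hhe heh i (by omega)
    rw [fwdProd, hSeq, (he.2 i hi).mul_sandwich (fwdProd_mul_self i hx) hex hxe,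
      ih (by omega), fwdProd, mul_assoc]

theorem IsEChain.bwdProd_hSeq (he : IsEChain e n) (hh : IsIdempotentElem h)
    (hhe : h * e 0 = h) (heh : e 0 * h = h) : bwdProd (hSeq e h) n = bwdProd e n * h := by
  have hop := he.op.fwdProd_hSeq (congrArg MulOpposite.op hh.eq) (congrArg MulOpposite.op heh)
    (congrArg MulOpposite.op hhe)
  rw [funext (hSeq_op e h), fwdProd_op, fwdProd_op, ← op_mul] at hop
  exact op_injective hop

end EChain

/-- Evaluation of E-chains is compatible with restriction: if `(e₀, …, eₙ)` is
an E-chain and `h` is an idempotent with `h·e₀ = e₀·h = h`, then with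
`h₀ = h`, `hᵢ = eᵢ·h_{i-1}·eᵢ` one has `h₀·h₁⋯hₙ = h·e₀·e₁⋯eₙ` and
`hₙ·h_{n-1}⋯h₁·h₀ = eₙ·e_{n-1}⋯e₁·e₀·h`. -/
theorem echain_evaluation_compatible_with_restriction {S : Type*} [Semigroup S]
    (e : ℕ → S) (n : ℕ) (h : S)
    (hidem : ∀ i ≤ n, e i * e i = e i)
    (hchain : ∀ i < n,
      (e i * e (i + 1) = e (i + 1) ∧ e (i + 1) * e i = e i) ∨
      (e i * e (i + 1) = e i ∧ e (i + 1) * e i = e (i + 1)))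
    (hh : h * h = h) (hhe : h * e 0 = h) (heh : e 0 * h = h) :
    fwdProd (hSeq e h) n = h * fwdProd e n ∧
    bwdProd (hSeq e h) n = bwdProd e n * h := by
  have he : IsEChain e n := ⟨hidem, hchain⟩
  exact ⟨he.fwdProd_hSeq hh hhe heh, he.bwdProd_hSeq hh hhe heh⟩
end

section
/- Let S be a regular semigroup and T = {(e,u,f) : e, f ∈ E(S), e·u = u = u·f} with the equivalence ∼. Composition is well defined on ∼-classes: if (e,u,f) ∼ (e₁,u₁,f₁), (g,v,k) ∼ (g₁,v₁,k₁), and f L g, then f₁ L g₁, e·(u·v) = u·v, (u·v)·k = u·v, and (e, u·v, k) ∼ (e₁, u₁·v₁, k₁). -/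
/-- Green's `L` relation on idempotents: `e L g` iff `e·g = e` and `g·e = g`. -/
def LRel {S : Type*} [Semigroup S] (e g : S) : Prop := e * g = e ∧ g * e = g

/-- The set `T = {(e,u,f) : e, f ∈ E(S), e·u = u = u·f}` of triples. -/
def TSet (S : Type*) [Semigroup S] : Set (S × S × S) :=
  {t | t.1 * t.1 = t.1 ∧ t.2.2 * t.2.2 = t.2.2 ∧
       t.1 * t.2.1 = t.2.1 ∧ t.2.1 * t.2.2 = t.2.1}

/-- The relation `∼` on triples: `(e,u,f) ∼ (g,v,h)` iff `e L g`, `f L h`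
and `u = e·v`. -/
def simRel {S : Type*} [Semigroup S] (a b : S × S × S) : Prop :=
  LRel a.1 b.1 ∧ LRel a.2.2 b.2.2 ∧ a.2.1 = a.1 * b.2.1

namespace LRel

variable {S : Type*} [Semigroup S] {e f g u : S}

theorem symm (h : LRel e f) : LRel f e := ⟨h.2, h.1⟩

theorem trans (hef : LRel e f) (hfg : LRel f g) : LRel e g :=
  ⟨by rw [← hef.1, mul_assoc, hfg.1], by rw [← hfg.2, mul_assoc, hef.2]⟩

theorem mul_right_eq (hfg : LRel f g) (hu : u * f = u) : u * g = u := by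
  rw [← hu, mul_assoc, hfg.1]

end LRel

theorem simRel_mul {S : Type*} [Semigroup S] {e u f e₁ u₁ f₁ g v k g₁ v₁ k₁ : S}
    (h12 : simRel (e, u, f) (e₁, u₁, f₁)) (h34 : simRel (g, v, k) (g₁, v₁, k₁))
    (hug : u * g = u) :
    simRel (e, u * v, k) (e₁, u₁ * v₁, k₁) := by
  obtain ⟨hee₁, -, hu : u = e * u₁⟩ := h12
  obtain ⟨-, hkk₁, hv : v = g * v₁⟩ := h34
  refine ⟨hee₁, hkk₁, ?_⟩
  calc u * v = u * g * v₁ := by rw [mul_assoc, ← hv]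
    _ = e * (u₁ * v₁) := by rw [hug, hu, mul_assoc]

theorem composition_well_defined_general {S : Type*} [Semigroup S]
    (e u f e₁ u₁ f₁ g v k g₁ v₁ k₁ : S)
    (hT1 : (e, u, f) ∈ TSet S)
    (hT3 : (g, v, k) ∈ TSet S)
    (h12 : simRel (e, u, f) (e₁, u₁, f₁))
    (h34 : simRel (g, v, k) (g₁, v₁, k₁))
    (hfg : LRel f g) :
    LRel f₁ g₁ ∧ e * (u * v) = u * v ∧ (u * v) * k = u * v ∧
    simRel (e, u * v, k) (e₁, u₁ * v₁, k₁) := by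
  obtain ⟨-, -, heu, huf⟩ := hT1
  obtain ⟨-, -, -, hvk⟩ := hT3
  refine ⟨h12.2.1.symm.trans (hfg.trans h34.1), ?_, ?_, simRel_mul h12 h34 (hfg.mul_right_eq huf)⟩
  · rw [← mul_assoc, heu]
  · rw [mul_assoc, hvk]

/-- Composition is well defined on `∼`-classes: if `(e,u,f) ∼ (e₁,u₁,f₁)`,
`(g,v,k) ∼ (g₁,v₁,k₁)` and `f L g`, then `f₁ L g₁`, `e·(u·v) = u·v`,
`(u·v)·k = u·v` and `(e, u·v, k) ∼ (e₁, u₁·v₁, k₁)`. -/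
theorem composition_well_defined {S : Type*} [Semigroup S]
    (hreg : ∀ a : S, ∃ b : S, a * b * a = a ∧ b * a * b = b)
    (e u f e₁ u₁ f₁ g v k g₁ v₁ k₁ : S)
    (hT1 : (e, u, f) ∈ TSet S) (hT2 : (e₁, u₁, f₁) ∈ TSet S)
    (hT3 : (g, v, k) ∈ TSet S) (hT4 : (g₁, v₁, k₁) ∈ TSet S)
    (h12 : simRel (e, u, f) (e₁, u₁, f₁))
    (h34 : simRel (g, v, k) (g₁, v₁, k₁))
    (hfg : LRel f g) :
    LRel f₁ g₁ ∧ e * (u * v) = u * v ∧ (u * v) * k = u * v ∧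
    simRel (e, u * v, k) (e₁, u₁ * v₁, k₁) :=
  composition_well_defined_general e u f e₁ u₁ f₁ g v k g₁ v₁ k₁ hT1 hT3 h12 h34 hfg
end

section
/- Independence of the sandwich element: let S be a regular semigroup, let e, g, h be idempotents with e·h = h, h·g = h and g·h·e = g·e (so h is a sandwich element for the pair (g,e)), and let x ∈ S, x' ∈ V(x) with x·x' = e. Then h·e is idempotent and (g·h)·(h·e)·(h·e·x)·(x'·h·e·x) = g·x. Consequently the composite of the retraction [(g, g·h, h)], the E-chain isomorphism [(h, h·e, h·e)], the restriction isomorphism [(h·e, h·e·x, x'·h·e·x)] and the inclusion into the L-class of x'·x equals [(g, g·x, x'·x)], independently of the choice of the sandwich element h. -/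
/-!
Everything follows from two absorption laws: `h·e·h = h` (from `e·h = h` and `h² = h`) and
`e·x = x` (from `x·x' = e`). With them the composite collapses step by step,
`g·h·(h·e) = g·e`, then `g·e·(h·e·x) = g·h·x`, and finally `g·h·x·(x'·h·e·x) = g·h·e·h·e·x = g·h·e·x`,
which is `g·e·x = g·x` by the sandwich condition `g·h·e = g·e`.
-/

section Semigroup

variable {S : Type*} [Semigroup S]

theorem LRel.refl_of_idempotent {e : S} (he : e * e = e) : LRel e e := ⟨he, he⟩

theorem mul_mul_eq_self_of_left_absorb {e h : S} (hh : h * h = h) (heh : e * h = h) :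
    h * e * h = h := by
  rw [mul_assoc, heh, hh]

theorem mul_idempotent_of_left_absorb {e h : S} (hh : h * h = h) (heh : e * h = h) :
    h * e * (h * e) = h * e := by
  rw [← mul_assoc, mul_mul_eq_self_of_left_absorb hh heh]

theorem inv_mul_idempotent {x x' : S} (hxx'x : x * x' * x = x) : x' * x * (x' * x) = x' * x := by
  rw [mul_assoc, ← mul_assoc x, hxx'x]

theorem left_absorb_of_mul_inv_eq {x x' e : S} (hxx'x : x * x' * x = x) (hxe : x * x' = e) :
    e * x = x := by
  rw [← hxe, hxx'x]

theorem sandwich_composite_eq {e g h x x' : S} (hh : h * h = h) (heh : e * h = h)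
    (hghe : g * h * e = g * e) (hxe : x * x' = e) (hex : e * x = x) :
    g * h * (h * e) * (h * e * x) * (x' * h * e * x) = g * x := by
  have hheh : h * e * h = h := mul_mul_eq_self_of_left_absorb hh heh
  calc g * h * (h * e) * (h * e * x) * (x' * h * e * x)
      = g * (h * h) * e * (h * e * x) * (x' * h * e * x) := by simp only [mul_assoc]
    _ = g * e * (h * e * x) * (x' * h * e * x) := by rw [hh, hghe]
    _ = g * (e * h) * (e * x) * (x' * h * e * x) := by simp only [mul_assoc]
    _ = g * h * (x * x') * h * e * x := by rw [heh, hex]; simp only [mul_assoc]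
    _ = g * (h * e * h) * e * x := by rw [hxe]; simp only [mul_assoc]
    _ = g * x := by rw [hheh, hghe, mul_assoc, hex]

end Semigroup

theorem sandwich_independence_general {S : Type*} [Semigroup S]
    (e g h x x' : S)
    (hg : g * g = g) (hh : h * h = h)
    (heh : e * h = h) (hghe : g * h * e = g * e)
    (hinv : x * x' * x = x ∧ x' * x * x' = x') (hxe : x * x' = e) :
    (h * e) * (h * e) = h * e ∧
    g * h * (h * e) * (h * e * x) * (x' * h * e * x) = g * x ∧
    simRel (g, g * h * (h * e) * (h * e * x) * (x' * h * e * x), x' * x)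
      (g, g * x, x' * x) := by
  have hcomp := sandwich_composite_eq hh heh hghe hxe (left_absorb_of_mul_inv_eq hinv.1 hxe)
  refine ⟨mul_idempotent_of_left_absorb hh heh, hcomp, LRel.refl_of_idempotent hg,
    LRel.refl_of_idempotent (inv_mul_idempotent hinv.1), ?_⟩
  change _ = g * (g * x)
  rw [hcomp, ← mul_assoc, hg]

/-- Independence of the sandwich element: let `e, g, h` be idempotents with
`e·h = h`, `h·g = h` and `g·h·e = g·e` (so `h` is a sandwich element for the
pair `(g,e)`), and let `x' ∈ V(x)` with `x·x' = e`.  Then `h·e` is idempotent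
and `(g·h)·(h·e)·(h·e·x)·(x'·h·e·x) = g·x`; consequently the composite of the
retraction `[(g, g·h, h)]`, the E-chain isomorphism `[(h, h·e, h·e)]`, the
restriction isomorphism `[(h·e, h·e·x, x'·h·e·x)]` and the inclusion into the
`L`-class of `x'·x` equals `[(g, g·x, x'·x)]`, independently of the choice of
the sandwich element `h`. -/
theorem sandwich_independence {S : Type*} [Semigroup S]
    (hreg : ∀ a : S, ∃ b : S, a * b * a = a ∧ b * a * b = b)
    (e g h x x' : S)
    (he : e * e = e) (hg : g * g = g) (hh : h * h = h)
    (heh : e * h = h) (hhg : h * g = h) (hghe : g * h * e = g * e)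
    (hinv : x * x' * x = x ∧ x' * x * x' = x') (hxe : x * x' = e) :
    (h * e) * (h * e) = h * e ∧
    g * h * (h * e) * (h * e * x) * (x' * h * e * x) = g * x ∧
    simRel (g, g * h * (h * e) * (h * e * x) * (x' * h * e * x), x' * x)
      (g, g * x, x' * x) :=
  sandwich_independence_general e g h x x' hg hh heh hghe hinv hxe
end

section
/- Principal cones in 𝓛_G: let S be a regular semigroup, x ∈ S, x' ∈ V(x), e = x·x', f = x'·x. The assignment sending the L-class of an idempotent g to the morphism [(g, g·x, f)] is a normal cone with apex the L-class of f: (i) it is well defined, i.e. if g L g₁ then (g, g·x, f) ∼ (g₁, g₁·x, f); (ii) g·(g·x) = g·x and (g·x)·f = g·x, so (g, g·x, f) ∈ T; (iii) it is compatible with inclusions: if g'·g = g' then [(g', g', g)]·[(g, g·x, f)] = [(g', g'·x, f)]; and (iv) its component at the L-class of e is an isomorphism, namely [(e, x, f)] with inverse [(f, x', e)] (since x·x' = e and x'·x = f). -/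
section

variable {S : Type*} [Semigroup S]

lemma IsIdempotentElem.lRel_self {e : S} (he : IsIdempotentElem e) : LRel e e := ⟨he, he⟩

lemma IsIdempotentElem.of_mul_mul_eq_self {x y : S} (h : x * y * x = x) :
    IsIdempotentElem (y * x) := by
  rw [IsIdempotentElem, mul_assoc, ← mul_assoc x y x, h]

lemma mul_mul_mul_eq_of_mul_mul_eq_self {x y : S} (h : x * y * x = x) (g : S) :
    g * x * (y * x) = g * x := by
  rw [mul_assoc, ← mul_assoc x, h]

lemma LRel.mul_mul_eq {g g₁ : S} (h : LRel g g₁) (a : S) : g * (g₁ * a) = g * a := by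
  rw [← mul_assoc, h.1]

lemma simRel_of_lRel {g g₁ f u v : S} (hg : LRel g g₁) (hf : IsIdempotentElem f)
    (huv : u = g * v) : simRel (g, u, f) (g₁, v, f) :=
  ⟨hg, hf.lRel_self, huv⟩

end

theorem principal_cone_general {S : Type*} [Semigroup S]
    (x x' : S) (hinv : x * x' * x = x ∧ x' * x * x' = x') :
    -- (i) well defined
    (∀ g g₁ : S, g * g = g → g₁ * g₁ = g₁ → LRel g g₁ →
      simRel (g, g * x, x' * x) (g₁, g₁ * x, x' * x)) ∧
    -- (ii) the components are genuine triples in `T`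
    (∀ g : S, g * g = g →
      g * (g * x) = g * x ∧ (g * x) * (x' * x) = g * x) ∧
    -- (iii) compatibility with inclusions
    (∀ g g' : S, g * g = g → g' * g' = g' → g' * g = g' →
      simRel (g', g' * (g * x), x' * x) (g', g' * x, x' * x)) ∧
    -- (iv) the component at the `L`-class of `e = x·x'` is the isomorphism
    -- `[(e, x, f)]` with inverse `[(f, x', e)]`
    ((x * x') * x = x ∧ x * (x' * x) = x ∧
      (x' * x) * x' = x' ∧ x' * (x * x') = x') := by
  obtain ⟨hx, hx'⟩ := hinv
  have hf : IsIdempotentElem (x' * x) := .of_mul_mul_eq_self hx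
  refine ⟨fun g g₁ _ _ hgg₁ => simRel_of_lRel hgg₁ hf (hgg₁.mul_mul_eq x).symm,
    fun g hg => ⟨IsIdempotentElem.mul_self_mul hg x, mul_mul_mul_eq_of_mul_mul_eq_self hx g⟩,
    fun g g' _ hg' hg'g => simRel_of_lRel (IsIdempotentElem.lRel_self hg') hf ?_,
    hx, ?_, hx', ?_⟩
  · rw [← mul_assoc, hg'g, IsIdempotentElem.mul_self_mul hg']
  · rw [← mul_assoc, hx]
  · rw [← mul_assoc, hx']

/-- Principal cones in `𝓛_G`: for `x' ∈ V(x)`, `e = x·x'`, `f = x'·x`, the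
assignment sending the `L`-class of an idempotent `g` to `[(g, g·x, f)]` is a
normal cone with apex the `L`-class of `f`:
(i) it is well defined on `L`-classes;
(ii) `g·(g·x) = g·x` and `(g·x)·f = g·x`, so `(g, g·x, f) ∈ T`;
(iii) it is compatible with inclusions:
`[(g', g', g)]·[(g, g·x, f)] = [(g', g'·x, f)]` when `g'·g = g'`;
(iv) its component at the `L`-class of `e` is the isomorphism `[(e, x, f)]`
with inverse `[(f, x', e)]`. -/
theorem principal_cone {S : Type*} [Semigroup S]
    (hreg : ∀ a : S, ∃ b : S, a * b * a = a ∧ b * a * b = b)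
    (x x' : S) (hinv : x * x' * x = x ∧ x' * x * x' = x') :
    -- (i) well defined
    (∀ g g₁ : S, g * g = g → g₁ * g₁ = g₁ → LRel g g₁ →
      simRel (g, g * x, x' * x) (g₁, g₁ * x, x' * x)) ∧
    -- (ii) the components are genuine triples in `T`
    (∀ g : S, g * g = g →
      g * (g * x) = g * x ∧ (g * x) * (x' * x) = g * x) ∧
    -- (iii) compatibility with inclusions
    (∀ g g' : S, g * g = g → g' * g' = g' → g' * g = g' →
      simRel (g', g' * (g * x), x' * x) (g', g' * x, x' * x)) ∧
    -- (iv) the component at the `L`-class of `e = x·x'` is the isomorphism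
    -- `[(e, x, f)]` with inverse `[(f, x', e)]`
    ((x * x') * x = x ∧ x * (x' * x) = x ∧
      (x' * x) * x' = x' ∧ x' * (x * x') = x') :=
  principal_cone_general x x' hinv
end
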